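/- Define GBCVI_n(k) as in the generalized Dirichlet BCVI. Suppose g(n)/n → ∞, α_k(n)/g(n) → c_k > 0, and β_k(n)/g(n) → d_k > 0 as n → ∞. Then for k = 2,...,K-1, lim_{n→∞} GBCVI_n(k) = (c_k/(c_k+d_k)) ∏_{i=2}^{k-1} d_i/(c_i+d_i), and lim_{n→∞} GBCVI_n(K) = ∏_{k=2}^{K-1} d_k/(c_k+d_k). -/

import Mathlib

open Finset Filter Topology

/-
Every numerator and denominator has the form `a(n) + n·S` with `a(n)` of order `g(n)`; dividing
by `g(n)` and using `n / g(n) → 0`, each factor `(a + nS)/(b + nT)` tends to `lim (a/g) / lim (b/g)`,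
so the `r`-terms disappear and the products converge factor by factor.
-/

theorem tendsto_add_mul_div_add_mul {ι : Type*} {l : Filter ι} {a b g x : ι → ℝ} {la lb : ℝ}
    (hg : ∀ᶠ i in l, g i ≠ 0) (hx : Tendsto (fun i => x i / g i) l (𝓝 0))
    (ha : Tendsto (fun i => a i / g i) l (𝓝 la)) (hb : Tendsto (fun i => b i / g i) l (𝓝 lb))
    (hlb : lb ≠ 0) (S T : ℝ) :
    Tendsto (fun i => (a i + x i * S) / (b i + x i * T)) l (𝓝 (la / lb)) := by
  have hnum : Tendsto (fun i => a i / g i + x i / g i * S) l (𝓝 la) := by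
    simpa using ha.add (hx.mul_const S)
  have hden : Tendsto (fun i => b i / g i + x i / g i * T) l (𝓝 lb) := by
    simpa using hb.add (hx.mul_const T)
  refine (hnum.div hden hlb).congr' (hg.mono fun i hgi => ?_)
  simp only [Pi.div_apply]
  field_simp

theorem eventually_ne_zero_of_div_natCast_tendsto_atTop {g : ℕ → ℝ}
    (hg : Tendsto (fun n : ℕ => g n / n) atTop atTop) : ∀ᶠ n in atTop, g n ≠ 0 :=
  (hg.eventually_gt_atTop 0).mono fun n hpos hzero => by simp [hzero] at hpos

theorem gd_bcvi_limit_large_params_general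
    (K : ℕ) (α β : ℕ → ℕ → ℝ) (r c d : ℕ → ℝ) (g : ℕ → ℝ)
    (hgn : Tendsto (fun n : ℕ => g n / n) atTop atTop)
    (hc : ∀ k ∈ Finset.Icc 2 (K - 1), 0 < c k)
    (hd : ∀ k ∈ Finset.Icc 2 (K - 1), 0 < d k)
    (hclim : ∀ k ∈ Finset.Icc 2 (K - 1),
      Tendsto (fun n : ℕ => α n k / g n) atTop (𝓝 (c k)))
    (hdlim : ∀ k ∈ Finset.Icc 2 (K - 1),
      Tendsto (fun n : ℕ => β n k / g n) atTop (𝓝 (d k))) :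
    (∀ k ∈ Finset.Icc 2 (K - 1),
      Tendsto (fun n : ℕ =>
          (α n k + n * r k) / (α n k + β n k + n * ∑ i ∈ Finset.Icc k K, r i) *
          ∏ i ∈ Finset.Icc 2 (k - 1),
            (β n i + n * ∑ j ∈ Finset.Icc (i + 1) K, r j) /
            (α n i + β n i + n * ∑ j ∈ Finset.Icc i K, r j))
        atTop (𝓝 (c k / (c k + d k) *
          ∏ i ∈ Finset.Icc 2 (k - 1), d i / (c i + d i)))) ∧
    Tendsto (fun n : ℕ =>
        ∏ k ∈ Finset.Icc 2 (K - 1),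
          (β n k + n * ∑ i ∈ Finset.Icc (k + 1) K, r i) /
          (α n k + β n k + n * ∑ i ∈ Finset.Icc k K, r i))
      atTop (𝓝 (∏ k ∈ Finset.Icc 2 (K - 1), d k / (c k + d k))) := by
  have hng : Tendsto (fun n : ℕ => (n : ℝ) / g n) atTop (𝓝 0) := by
    refine hgn.inv_tendsto_atTop.congr fun n => ?_
    simp only [Pi.inv_apply, inv_div]
  have hfactor : ∀ k ∈ Finset.Icc 2 (K - 1), ∀ (a : ℕ → ℝ) (la S T : ℝ),
      Tendsto (fun n => a n / g n) atTop (𝓝 la) →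
      Tendsto (fun n : ℕ => (a n + n * S) / (α n k + β n k + n * T)) atTop
        (𝓝 (la / (c k + d k))) := fun k hk a la S T ha =>
    tendsto_add_mul_div_add_mul (eventually_ne_zero_of_div_natCast_tendsto_atTop hgn) hng ha
      (by simpa only [add_div] using (hclim k hk).add (hdlim k hk))
      (add_pos (hc k hk) (hd k hk)).ne' S T
  have hprod : ∀ m ≤ K - 1, Tendsto (fun n : ℕ => ∏ i ∈ Finset.Icc 2 m,
      (β n i + n * ∑ j ∈ Finset.Icc (i + 1) K, r j) /
      (α n i + β n i + n * ∑ j ∈ Finset.Icc i K, r j))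
      atTop (𝓝 (∏ i ∈ Finset.Icc 2 m, d i / (c i + d i))) := fun m hm =>
    tendsto_finsetProd _ fun i hi =>
      have hi' : i ∈ Finset.Icc 2 (K - 1) := by simp only [Finset.mem_Icc] at hi ⊢; omega
      hfactor i hi' _ _ _ _ (hdlim i hi')
  refine ⟨fun k hk => ?_, hprod _ le_rfl⟩
  exact (hfactor k hk _ _ _ _ (hclim k hk)).mul
    (hprod _ (by simp only [Finset.mem_Icc] at hk; omega))

/-- If `g(n)/n → ∞`, `α_k(n)/g(n) → c_k > 0` and `β_k(n)/g(n) → d_k > 0`, then for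
`k = 2, …, K-1`, `GBCVI_n(k) → (c_k/(c_k+d_k)) ∏_{i<k} d_i/(c_i+d_i)` and
`GBCVI_n(K) → ∏_{k=2}^{K-1} d_k/(c_k+d_k)`. -/
theorem gd_bcvi_limit_large_params
    (K : ℕ) (hK : 3 ≤ K) (α β : ℕ → ℕ → ℝ) (r c d : ℕ → ℝ) (g : ℕ → ℝ)
    (hα : ∀ n, ∀ k ∈ Finset.Icc 2 (K - 1), 0 < α n k)
    (hβ : ∀ n, ∀ k ∈ Finset.Icc 2 (K - 1), 0 < β n k)
    (hr : ∀ k ∈ Finset.Icc 2 K, 0 ≤ r k)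
    (hrsum : ∑ k ∈ Finset.Icc 2 K, r k = 1)
    (hg : ∀ n, 0 < g n)
    (hgn : Tendsto (fun n : ℕ => g n / n) atTop atTop)
    (hc : ∀ k ∈ Finset.Icc 2 (K - 1), 0 < c k)
    (hd : ∀ k ∈ Finset.Icc 2 (K - 1), 0 < d k)
    (hclim : ∀ k ∈ Finset.Icc 2 (K - 1),
      Tendsto (fun n : ℕ => α n k / g n) atTop (𝓝 (c k)))
    (hdlim : ∀ k ∈ Finset.Icc 2 (K - 1),
      Tendsto (fun n : ℕ => β n k / g n) atTop (𝓝 (d k))) :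
    (∀ k ∈ Finset.Icc 2 (K - 1),
      Tendsto (fun n : ℕ =>
          (α n k + n * r k) / (α n k + β n k + n * ∑ i ∈ Finset.Icc k K, r i) *
          ∏ i ∈ Finset.Icc 2 (k - 1),
            (β n i + n * ∑ j ∈ Finset.Icc (i + 1) K, r j) /
            (α n i + β n i + n * ∑ j ∈ Finset.Icc i K, r j))
        atTop (𝓝 (c k / (c k + d k) *
          ∏ i ∈ Finset.Icc 2 (k - 1), d i / (c i + d i)))) ∧
    Tendsto (fun n : ℕ =>
        ∏ k ∈ Finset.Icc 2 (K - 1),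
          (β n k + n * ∑ i ∈ Finset.Icc (k + 1) K, r i) /
          (α n k + β n k + n * ∑ i ∈ Finset.Icc k K, r i))
      atTop (𝓝 (∏ k ∈ Finset.Icc 2 (K - 1), d k / (c k + d k))) :=
  gd_bcvi_limit_large_params_general K α β r c d g hgn hc hd hclim hdlim
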